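/- (Uniqueness for a fully degenerate ground manifold.) Suppose P H P = 𝓔·P for some real number 𝓔 (all ground-state energies equal), and suppose there is a unit vector ψ₀ with P ψ₀ = ψ₀ and Q H ψ₀ = 0 such that every vector ψ satisfying P ψ = ψ and Q H ψ = 0 is a scalar multiple of ψ₀ (the kernel is one-dimensional). Then ψ₀ψ₀ᴴ is a dark state, and it is the unique one: every density matrix ρ with L(ρ) = 0 and ρ = PρP equals ψ₀ψ₀ᴴ. -/

import Mathlib

open Matrix Complex BigOperators ComplexOrder

/-- Projection onto the ground-state indices. -/
noncomputable def Pg (Ng Ne : ℕ) : Matrix (Fin Ng ⊕ Fin Ne) (Fin Ng ⊕ Fin Ne) ℂ :=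
  Matrix.diagonal (Sum.elim (fun _ => 1) (fun _ => 0))

/-- Projection onto the excited-state indices. -/
noncomputable def Qe (Ng Ne : ℕ) : Matrix (Fin Ng ⊕ Fin Ne) (Fin Ng ⊕ Fin Ne) ℂ :=
  1 - Pg Ng Ne

/-- Jump operator |g_i⟩⟨e_j|. -/
noncomputable def jump (Ng Ne : ℕ) (i : Fin Ng) (j : Fin Ne) :
    Matrix (Fin Ng ⊕ Fin Ne) (Fin Ng ⊕ Fin Ne) ℂ :=
  Matrix.single (Sum.inl i) (Sum.inr j) 1

/-- Decay operator Γ = Σ γ_{ij} σ_{ij}ᴴ σ_{ij}. -/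
noncomputable def Gam (Ng Ne : ℕ) (γ : Fin Ng → Fin Ne → ℝ) :
    Matrix (Fin Ng ⊕ Fin Ne) (Fin Ng ⊕ Fin Ne) ℂ :=
  ∑ i, ∑ j, (γ i j : ℂ) • ((jump Ng Ne i j)ᴴ * jump Ng Ne i j)

/-- The Lindblad generator. -/
noncomputable def Lindblad (Ng Ne : ℕ) (H : Matrix (Fin Ng ⊕ Fin Ne) (Fin Ng ⊕ Fin Ne) ℂ)
    (γ : Fin Ng → Fin Ne → ℝ) (ρ : Matrix (Fin Ng ⊕ Fin Ne) (Fin Ng ⊕ Fin Ne) ℂ) :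
    Matrix (Fin Ng ⊕ Fin Ne) (Fin Ng ⊕ Fin Ne) ℂ :=
  (-Complex.I) • (H * ρ - ρ * H) +
    ∑ i, ∑ j, (γ i j : ℂ) •
      (jump Ng Ne i j * ρ * (jump Ng Ne i j)ᴴ -
        (1 / 2 : ℂ) • ((jump Ng Ne i j)ᴴ * jump Ng Ne i j * ρ +
          ρ * ((jump Ng Ne i j)ᴴ * jump Ng Ne i j)))

/-- A dark state: a density matrix annihilated by the Lindbladian and supported on the
ground-state subspace. -/
def IsDarkState (Ng Ne : ℕ) (H : Matrix (Fin Ng ⊕ Fin Ne) (Fin Ng ⊕ Fin Ne) ℂ)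
    (γ : Fin Ng → Fin Ne → ℝ) (ρ : Matrix (Fin Ng ⊕ Fin Ne) (Fin Ng ⊕ Fin Ne) ℂ) : Prop :=
  ρ.PosSemidef ∧ ρ.trace = 1 ∧ Lindblad Ng Ne H γ ρ = 0 ∧ ρ = Pg Ng Ne * ρ * Pg Ng Ne

/-!
Supported on the ground manifold, a state is annihilated by every jump term of the Lindbladian
(each jump operator maps excited states to ground states), so `L ρ = 0` reduces to `[H, ρ] = 0`.
The degeneracy makes `ψ₀` an eigenvector of `H`, hence `ψ₀ψ₀ᴴ` is dark. Conversely, for a dark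
`ρ` the commutation gives `Q H ρ = Q ρ H = 0`, so every column of `ρ` lies in the kernel spanned
by `ψ₀`; a Hermitian matrix of trace one with this property is `ψ₀ψ₀ᴴ`.
-/

section RankOne

variable {ι : Type*} [Fintype ι]

lemma mul_vecMulVec_star_mul (M : Matrix ι ι ℂ) (ψ : ι → ℂ) :
    M * vecMulVec ψ (star ψ) * Mᴴ = vecMulVec (M *ᵥ ψ) (star (M *ᵥ ψ)) := by
  rw [mul_vecMulVec, vecMulVec_mul, star_mulVec]

lemma commute_vecMulVec_star_of_mulVec_eq_smul {H : Matrix ι ι ℂ} (hH : H.IsHermitian)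
    {E : ℝ} {ψ : ι → ℂ} (hψ : H *ᵥ ψ = (E : ℂ) • ψ) : Commute H (vecMulVec ψ (star ψ)) := by
  have hψ' : star ψ ᵥ* H = (E : ℂ) • star ψ := by
    rw [← hH.eq, ← star_mulVec, hψ, star_smul, Complex.star_def, Complex.conj_ofReal]
  rw [Commute, SemiconjBy, mul_vecMulVec, vecMulVec_mul, hψ, hψ', smul_vecMulVec, vecMulVec_smul]

lemma eq_vecMulVec_star_of_mulVec_mem_span {ρ : Matrix ι ι ℂ} (hρ : ρ.IsHermitian)
    (htr : ρ.trace = 1) {ψ : ι → ℂ} (hψ : star ψ ⬝ᵥ ψ = 1)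
    (hrange : ∀ v, ∃ c : ℂ, ρ *ᵥ v = c • ψ) : ρ = vecMulVec ψ (star ψ) := by
  set Pψ := vecMulVec ψ (star ψ)
  have hPψ : Pψ *ᵥ ψ = ψ := by rw [vecMulVec_mulVec, hψ, MulOpposite.op_one, one_smul]
  have hPρ : Pψ * ρ = ρ := ext_iff_mulVec.2 fun v => by
    obtain ⟨c, hc⟩ := hrange v
    rw [← mulVec_mulVec, hc, mulVec_smul, hPψ]
  have hρP : ρ * Pψ = ρ := by
    simpa only [conjTranspose_mul, hρ.eq, Pψ, conjTranspose_vecMulVec, star_star] using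
      congrArg conjTranspose hPρ
  set μ := (star ψ ᵥ* ρ) ⬝ᵥ ψ
  have hρμ : ρ = vecMulVec ψ (μ • star ψ) := by
    rw [← hρP, ← hPρ, vecMulVec_mul, vecMulVec_mul_vecMulVec]
  have hμ : μ = 1 := by
    rwa [hρμ, trace_vecMulVec, dotProduct_smul, dotProduct_comm, hψ, smul_eq_mul, mul_one] at htr
  rw [hρμ, hμ, one_smul]

end RankOne

section GroundProjection

variable {Ng Ne : ℕ}

lemma Pg_mul_Pg : Pg Ng Ne * Pg Ng Ne = Pg Ng Ne := by
  rw [Pg, diagonal_mul_diagonal]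
  exact congrArg diagonal (by funext a; cases a <;> simp)

lemma Pg_conjTranspose : (Pg Ng Ne)ᴴ = Pg Ng Ne := by
  rw [Pg, diagonal_conjTranspose]
  exact congrArg diagonal (by funext a; cases a <;> simp)

lemma Qe_mul_Pg : Qe Ng Ne * Pg Ng Ne = 0 := by
  rw [Qe, sub_mul, one_mul, Pg_mul_Pg, sub_self]

lemma jump_mul_Pg (i : Fin Ng) (j : Fin Ne) : jump Ng Ne i j * Pg Ng Ne = 0 := by
  ext a (k | k) <;> simp [jump, Pg, Matrix.single]

lemma Pg_mul_conjTranspose_jump (i : Fin Ng) (j : Fin Ne) :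
    Pg Ng Ne * (jump Ng Ne i j)ᴴ = 0 := by
  rw [← Pg_conjTranspose, ← conjTranspose_mul, jump_mul_Pg, conjTranspose_zero]

variable {ρ : Matrix (Fin Ng ⊕ Fin Ne) (Fin Ng ⊕ Fin Ne) ℂ}

lemma Pg_mul_of_eq_Pg_mul_mul_Pg (hρ : ρ = Pg Ng Ne * ρ * Pg Ng Ne) : Pg Ng Ne * ρ = ρ := by
  rw [hρ, ← mul_assoc, ← mul_assoc, Pg_mul_Pg]

lemma Qe_mul_of_eq_Pg_mul_mul_Pg (hρ : ρ = Pg Ng Ne * ρ * Pg Ng Ne) : Qe Ng Ne * ρ = 0 := by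
  rw [← Pg_mul_of_eq_Pg_mul_mul_Pg hρ, ← mul_assoc, Qe_mul_Pg, zero_mul]

lemma Lindblad_eq_of_eq_Pg_mul_mul_Pg (H : Matrix (Fin Ng ⊕ Fin Ne) (Fin Ng ⊕ Fin Ne) ℂ)
    (γ : Fin Ng → Fin Ne → ℝ) (hρ : ρ = Pg Ng Ne * ρ * Pg Ng Ne) :
    Lindblad Ng Ne H γ ρ = (-Complex.I) • (H * ρ - ρ * H) := by
  have hjρ (i : Fin Ng) (j : Fin Ne) : jump Ng Ne i j * ρ = 0 := by
    rw [hρ, ← mul_assoc, ← mul_assoc, jump_mul_Pg, zero_mul, zero_mul]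
  have hρj (i : Fin Ng) (j : Fin Ne) : ρ * (jump Ng Ne i j)ᴴ = 0 := by
    rw [hρ, mul_assoc, Pg_mul_conjTranspose_jump, mul_zero]
  simp only [Lindblad, mul_assoc, hjρ, ← mul_assoc ρ, hρj, mul_zero, zero_mul, add_zero,
    sub_zero, smul_zero, Finset.sum_const_zero]

lemma Lindblad_eq_zero_iff_commute (H : Matrix (Fin Ng ⊕ Fin Ne) (Fin Ng ⊕ Fin Ne) ℂ)
    (γ : Fin Ng → Fin Ne → ℝ) (hρ : ρ = Pg Ng Ne * ρ * Pg Ng Ne) :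
    Lindblad Ng Ne H γ ρ = 0 ↔ Commute H ρ := by
  rw [Lindblad_eq_of_eq_Pg_mul_mul_Pg H γ hρ, smul_eq_zero, sub_eq_zero]
  simp [Complex.I_ne_zero, Commute, SemiconjBy]

lemma mulVec_eq_smul_of_Pg_mul_mul_Pg_eq {H : Matrix (Fin Ng ⊕ Fin Ne) (Fin Ng ⊕ Fin Ne) ℂ}
    {E : ℂ} (hdeg : Pg Ng Ne * H * Pg Ng Ne = E • Pg Ng Ne) {ψ : Fin Ng ⊕ Fin Ne → ℂ}
    (hP : Pg Ng Ne *ᵥ ψ = ψ) (hQ : (Qe Ng Ne * H) *ᵥ ψ = 0) : H *ᵥ ψ = E • ψ := by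
  have hPH : (Pg Ng Ne * H) *ᵥ ψ = E • ψ := by
    rw [← hP, mulVec_mulVec, hdeg, smul_mulVec, hP]
  have hsplit : H = Pg Ng Ne * H + Qe Ng Ne * H := by rw [Qe, sub_mul, one_mul, add_sub_cancel]
  rw [hsplit, add_mulVec, hPH, hQ, add_zero]

end GroundProjection

theorem unique_dark_state_of_fully_degenerate_ground_general
    (Ng Ne : ℕ)
    (H : Matrix (Fin Ng ⊕ Fin Ne) (Fin Ng ⊕ Fin Ne) ℂ) (hH : H.IsHermitian)
    (γ : Fin Ng → Fin Ne → ℝ)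
    (𝓔 : ℝ) (hdeg : Pg Ng Ne * H * Pg Ng Ne = (𝓔 : ℂ) • Pg Ng Ne)
    (ψ₀ : Fin Ng ⊕ Fin Ne → ℂ) (hunit : star ψ₀ ⬝ᵥ ψ₀ = 1)
    (hψ₀P : Pg Ng Ne *ᵥ ψ₀ = ψ₀) (hψ₀Q : (Qe Ng Ne * H) *ᵥ ψ₀ = 0)
    (hker : ∀ ψ : Fin Ng ⊕ Fin Ne → ℂ, Pg Ng Ne *ᵥ ψ = ψ →
      (Qe Ng Ne * H) *ᵥ ψ = 0 → ∃ c : ℂ, ψ = c • ψ₀) :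
    IsDarkState Ng Ne H γ (vecMulVec ψ₀ (star ψ₀)) ∧
    ∀ ρ : Matrix (Fin Ng ⊕ Fin Ne) (Fin Ng ⊕ Fin Ne) ℂ,
      IsDarkState Ng Ne H γ ρ → ρ = vecMulVec ψ₀ (star ψ₀) := by
  have hsupp₀ : vecMulVec ψ₀ (star ψ₀) = Pg Ng Ne * vecMulVec ψ₀ (star ψ₀) * Pg Ng Ne := by
    have h := mul_vecMulVec_star_mul (Pg Ng Ne) ψ₀
    rwa [Pg_conjTranspose, hψ₀P, eq_comm] at h
  have hHψ₀ := mulVec_eq_smul_of_Pg_mul_mul_Pg_eq hdeg hψ₀P hψ₀Q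
  refine ⟨⟨posSemidef_vecMulVec_self_star ψ₀, ?_, ?_, hsupp₀⟩, ?_⟩
  · rw [trace_vecMulVec, dotProduct_comm, hunit]
  · exact (Lindblad_eq_zero_iff_commute H γ hsupp₀).2
      (commute_vecMulVec_star_of_mulVec_eq_smul hH hHψ₀)
  rintro ρ ⟨hpsd, htr, hL, hsupp⟩
  have hQHρ : Qe Ng Ne * H * ρ = 0 := by
    rw [mul_assoc, (Lindblad_eq_zero_iff_commute H γ hsupp).1 hL, ← mul_assoc,
      Qe_mul_of_eq_Pg_mul_mul_Pg hsupp, zero_mul]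
  refine eq_vecMulVec_star_of_mulVec_mem_span hpsd.isHermitian htr hunit fun v => hker _ ?_ ?_
  · rw [mulVec_mulVec, Pg_mul_of_eq_Pg_mul_mul_Pg hsupp]
  · rw [mulVec_mulVec, hQHρ, zero_mulVec]

theorem unique_dark_state_of_fully_degenerate_ground
    (Ng Ne : ℕ) (hNg : 1 ≤ Ng) (hNe : 1 ≤ Ne)
    (H : Matrix (Fin Ng ⊕ Fin Ne) (Fin Ng ⊕ Fin Ne) ℂ) (hH : H.IsHermitian)
    (γ : Fin Ng → Fin Ne → ℝ) (hγ : ∀ i j, 0 ≤ γ i j)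
    (hγpos : ∀ j, 0 < ∑ i, γ i j)
    (𝓔 : ℝ) (hdeg : Pg Ng Ne * H * Pg Ng Ne = (𝓔 : ℂ) • Pg Ng Ne)
    (ψ₀ : Fin Ng ⊕ Fin Ne → ℂ) (hunit : star ψ₀ ⬝ᵥ ψ₀ = 1)
    (hψ₀P : Pg Ng Ne *ᵥ ψ₀ = ψ₀) (hψ₀Q : (Qe Ng Ne * H) *ᵥ ψ₀ = 0)
    (hker : ∀ ψ : Fin Ng ⊕ Fin Ne → ℂ, Pg Ng Ne *ᵥ ψ = ψ →
      (Qe Ng Ne * H) *ᵥ ψ = 0 → ∃ c : ℂ, ψ = c • ψ₀) :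
    IsDarkState Ng Ne H γ (vecMulVec ψ₀ (star ψ₀)) ∧
    ∀ ρ : Matrix (Fin Ng ⊕ Fin Ne) (Fin Ng ⊕ Fin Ne) ℂ,
      IsDarkState Ng Ne H γ ρ → ρ = vecMulVec ψ₀ (star ψ₀) :=
  unique_dark_state_of_fully_degenerate_ground_general Ng Ne H hH γ 𝓔 hdeg ψ₀ hunit hψ₀P hψ₀Q hker
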